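/- arXiv:2403.15264 — 3 statements merged into one kernel-verified Lean document; each statement's English description precedes it below -/
import Mathlib

section
/- Let Q ∈ ℝ^{q×q} be symmetric and C ∈ ℝ^{q×m}. Then the following are equivalent: (i) for every nonzero v ∈ ℝ^q with Cᵀv = 0 one has vᵀQv < 0; (ii) there exists ρ ≥ 0 such that the matrix Q − ρ·CCᵀ is negative definite. -/
open Matrix

/-!
Both sides are homogeneous of degree two, so it suffices to work on the compact unit sphere.
There the open sets `{v | vᵀQv < n vᵀCCᵀv}` increase with `n` and cover the sphere (on `ker Cᵀ`
already for `n = 0`), hence a single `n` works.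
-/

theorem IsCompact.exists_nat_forall_lt_mul {X : Type*} [TopologicalSpace X] {K : Set X}
    (hK : IsCompact K) {f g : X → ℝ} (hf : Continuous f) (hg : Continuous g)
    (hg_nonneg : ∀ x, 0 ≤ g x) (h : ∀ x ∈ K, g x = 0 → f x < 0) :
    ∃ n : ℕ, ∀ x ∈ K, f x < n * g x := by
  refine hK.elim_directed_cover (fun n : ℕ => {x | f x < n * g x})
    (fun n => isOpen_lt hf (continuous_const.mul hg)) (fun x hx => ?_) ?_
  · rw [Set.mem_iUnion]
    rcases (hg_nonneg x).eq_or_lt with hgx | hgx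
    · exact ⟨0, by simpa using h x hx hgx.symm⟩
    · obtain ⟨n, hn⟩ := exists_nat_gt (f x / g x)
      exact ⟨n, (div_lt_iff₀ hgx).1 hn⟩
  · refine Monotone.directed_le fun a b hab x hx => ?_
    exact lt_of_lt_of_le hx (mul_le_mul_of_nonneg_right (Nat.cast_le.2 hab) (hg_nonneg x))

theorem Matrix.dotProduct_mul_transpose_mulVec {R n m : Type*} [CommSemiring R] [Fintype n]
    [Fintype m] (C : Matrix n m R) (v : n → R) :
    v ⬝ᵥ ((C * Cᵀ) *ᵥ v) = (Cᵀ *ᵥ v) ⬝ᵥ (Cᵀ *ᵥ v) := by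
  rw [← mulVec_mulVec, dotProduct_mulVec, ← mulVec_transpose]

theorem Matrix.continuous_dotProduct_mulVec {n : Type*} [Fintype n] (A : Matrix n n ℝ) :
    Continuous fun v : n → ℝ => v ⬝ᵥ (A *ᵥ v) :=
  continuous_id.dotProduct (continuous_const.matrix_mulVec continuous_id)

theorem Matrix.dotProduct_mulVec_neg_of_forall_mem_sphere {n : Type*} [Fintype n]
    (A : Matrix n n ℝ) (h : ∀ u ∈ Metric.sphere (0 : n → ℝ) 1, u ⬝ᵥ (A *ᵥ u) < 0)
    {v : n → ℝ} (hv : v ≠ 0) : v ⬝ᵥ (A *ᵥ v) < 0 := by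
  have hu := h (‖v‖⁻¹ • v) (by simpa using norm_smul_inv_norm (𝕜 := ℝ) hv)
  rw [mulVec_smul, smul_dotProduct, dotProduct_smul, smul_eq_mul, smul_eq_mul, ← mul_assoc] at hu
  exact neg_of_mul_neg_right hu (by positivity)

theorem finsler_lemma_general {q m : ℕ} (Q : Matrix (Fin q) (Fin q) ℝ)
    (C : Matrix (Fin q) (Fin m) ℝ) :
    (∀ v : Fin q → ℝ, v ≠ 0 → Cᵀ *ᵥ v = 0 → v ⬝ᵥ (Q *ᵥ v) < 0) ↔
      (∃ ρ : ℝ, 0 ≤ ρ ∧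
        ∀ v : Fin q → ℝ, v ≠ 0 → v ⬝ᵥ ((Q - ρ • (C * Cᵀ)) *ᵥ v) < 0) := by
  have hgram := dotProduct_mul_transpose_mulVec C
  have hsplit (ρ : ℝ) (v : Fin q → ℝ) : v ⬝ᵥ ((Q - ρ • (C * Cᵀ)) *ᵥ v) =
      v ⬝ᵥ (Q *ᵥ v) - ρ * v ⬝ᵥ ((C * Cᵀ) *ᵥ v) := by
    rw [sub_mulVec, dotProduct_sub, smul_mulVec, dotProduct_smul, smul_eq_mul]
  constructor
  · intro H
    obtain ⟨n, hn⟩ := (isCompact_sphere (0 : Fin q → ℝ) 1).exists_nat_forall_lt_mul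
      (continuous_dotProduct_mulVec Q) (continuous_dotProduct_mulVec (C * Cᵀ))
      (fun v => hgram v ▸ Finset.sum_nonneg fun i _ => mul_self_nonneg _)
      (fun v hv hv0 => H v (by rintro rfl; simp at hv)
        (dotProduct_self_eq_zero.1 (hgram v ▸ hv0)))
    refine ⟨n, n.cast_nonneg, fun v hv => ?_⟩
    refine dotProduct_mulVec_neg_of_forall_mem_sphere _ (fun u hu => ?_) hv
    linarith [hsplit n u, hn u hu]
  · rintro ⟨ρ, -, H⟩ v hv hker
    simpa [hsplit, hgram, hker] using H v hv

/-- Finsler-type lemma: for symmetric `Q ∈ ℝ^{q×q}` and `C ∈ ℝ^{q×m}`,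
the kernel-constrained negativity `Cᵀv = 0, v ≠ 0 ⟹ vᵀQv < 0` is equivalent to the
existence of `ρ ≥ 0` such that `Q − ρ·CCᵀ` is negative definite. -/
theorem finsler_lemma {q m : ℕ} (Q : Matrix (Fin q) (Fin q) ℝ) (hQ : Q.IsSymm)
    (C : Matrix (Fin q) (Fin m) ℝ) :
    (∀ v : Fin q → ℝ, v ≠ 0 → Cᵀ *ᵥ v = 0 → v ⬝ᵥ (Q *ᵥ v) < 0) ↔
      (∃ ρ : ℝ, 0 ≤ ρ ∧
        ∀ v : Fin q → ℝ, v ≠ 0 → v ⬝ᵥ ((Q - ρ • (C * Cᵀ)) *ᵥ v) < 0) :=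
  finsler_lemma_general Q C
end

section
/- Let M : ℝ → Sym(n,ℝ) be differentiable with values in symmetric positive-semidefinite matrices, let A : ℝ → ℝ^{n×n}, B : ℝ → ℝ^{n×m}, ρ : ℝ → ℝ, λ > 0, and suppose that for all t ≥ t₀ and all v ∈ ℝⁿ: vᵀ( M'(t) + M(t)A(t) + A(t)ᵀM(t) − ρ(t)·M(t)B(t)B(t)ᵀM(t) )v ≤ −2λ·vᵀM(t)v. If δx : ℝ → ℝⁿ is differentiable and satisfies δx'(t) = A(t)δx(t) − (ρ(t)/2)·B(t)B(t)ᵀM(t)δx(t) for all t ≥ t₀, then δx(t)ᵀM(t)δx(t) ≤ e^{−2λ(t−t₀)} · δx(t₀)ᵀM(t₀)δx(t₀) for all t ≥ t₀. -/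
/-! Along the closed loop, the energy `V = δxᵀ M δx` has derivative
`δxᵀ (M' + MA + AᵀM − ρ MBBᵀM) δx`: the two feedback terms coincide because `M` is symmetric.
The matrix inequality therefore gives `V' ≤ −2λ V`, and Grönwall's inequality gives the decay. -/

open Matrix

attribute [local instance] Matrix.normedAddCommGroup Matrix.normedSpace

section Calculus

variable {𝕜 ι κ : Type*} [NontriviallyNormedField 𝕜] [CompleteSpace 𝕜] [Fintype ι] [Fintype κ]
  {t : 𝕜}

theorem HasDerivAt.mulVec {M : 𝕜 → Matrix ι κ 𝕜} {x : 𝕜 → κ → 𝕜} {M' : Matrix ι κ 𝕜}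
    {x' : κ → 𝕜} (hM : HasDerivAt M M' t) (hx : HasDerivAt x x' t) :
    HasDerivAt (fun s ↦ M s *ᵥ x s) (M t *ᵥ x' + M' *ᵥ x t) t :=
  ((mulVecBilin 𝕜 𝕜 : Matrix ι κ 𝕜 →ₗ[𝕜] (κ → 𝕜) →ₗ[𝕜] ι → 𝕜).toContinuousBilinearMap
    |>.hasDerivAt_of_bilinear (fun _ ↦ hM) fun _ ↦ hx)

theorem HasDerivAt.dotProduct {x y : 𝕜 → ι → 𝕜} {x' y' : ι → 𝕜}
    (hx : HasDerivAt x x' t) (hy : HasDerivAt y y' t) :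
    HasDerivAt (fun s ↦ x s ⬝ᵥ y s) (x t ⬝ᵥ y' + x' ⬝ᵥ y t) t :=
  ((dotProductBilin 𝕜 𝕜 : (ι → 𝕜) →ₗ[𝕜] (ι → 𝕜) →ₗ[𝕜] 𝕜).toContinuousBilinearMap
    |>.hasDerivAt_of_bilinear (fun _ ↦ hx) fun _ ↦ hy)

end Calculus

theorem le_exp_mul_of_hasDerivAt_le_mul {f f' : ℝ → ℝ} {K a : ℝ}
    (hf : ∀ t ≥ a, HasDerivAt f (f' t) t) (bound : ∀ t ≥ a, f' t ≤ K * f t) {t : ℝ} (ht : a ≤ t) :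
    f t ≤ Real.exp (K * (t - a)) * f a := by
  have := le_gronwallBound_of_liminf_deriv_right_le (f := f) (f' := f') (δ := f a) (K := K)
    (ε := 0) (b := t) (fun s hs ↦ (hf s hs.1).continuousAt.continuousWithinAt)
    (fun s hs _ hr ↦ (hf s hs.1).hasDerivWithinAt.liminf_right_slope_le hr) le_rfl
    (fun s hs ↦ by simpa using bound s hs.1) t ⟨ht, le_rfl⟩
  rwa [gronwallBound_ε0, mul_comm] at this

theorem closedLoop_energy_deriv {R ι κ : Type*} [Field R] [CharZero R] [Fintype ι] [Fintype κ]
    {M M' A : Matrix ι ι R} {B : Matrix ι κ R} {ρ : R} (hM : M.IsSymm) {x x' : ι → R}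
    (hx' : x' = A *ᵥ x - (ρ / 2) • ((B * Bᵀ * M) *ᵥ x)) :
    x ⬝ᵥ (M *ᵥ x' + M' *ᵥ x) + x' ⬝ᵥ (M *ᵥ x)
      = x ⬝ᵥ ((M' + M * A + Aᵀ * M - ρ • (M * B * Bᵀ * M)) *ᵥ x) := by
  have transpose_dot : ∀ (N : Matrix ι ι R) (u w : ι → R), (N *ᵥ u) ⬝ᵥ w = u ⬝ᵥ (Nᵀ *ᵥ w) :=
    fun N u w ↦ by rw [dotProduct_comm, dotProduct_mulVec, mulVec_transpose, dotProduct_comm]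
  simp only [hx', sub_dotProduct, smul_dotProduct, mulVec_sub, dotProduct_sub,
    mulVec_smul, dotProduct_smul, transpose_dot, transpose_mul, transpose_transpose, hM.eq,
    mulVec_mulVec, add_mulVec, sub_mulVec, smul_mulVec, dotProduct_add,
    Matrix.mul_assoc, smul_eq_mul]
  ring

theorem energy_exponential_decay_general {n m : ℕ}
    (M : ℝ → Matrix (Fin n) (Fin n) ℝ)
    (A : ℝ → Matrix (Fin n) (Fin n) ℝ) (B : ℝ → Matrix (Fin n) (Fin m) ℝ)
    (ρ : ℝ → ℝ) (lam t₀ : ℝ)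
    (hMdiff : Differentiable ℝ M)
    (hMsymm : ∀ s, (M s).IsSymm)
    (hineq : ∀ t ≥ t₀, ∀ v : Fin n → ℝ,
      v ⬝ᵥ ((deriv M t + M t * A t + (A t)ᵀ * M t
        - ρ t • (M t * B t * (B t)ᵀ * M t)) *ᵥ v) ≤ -(2 * lam) * (v ⬝ᵥ (M t *ᵥ v)))
    (δx : ℝ → Fin n → ℝ) (hδxdiff : Differentiable ℝ δx)
    (hδx : ∀ t ≥ t₀, deriv δx t
      = A t *ᵥ δx t - (ρ t / 2) • ((B t * (B t)ᵀ * M t) *ᵥ δx t)) :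
    ∀ t ≥ t₀, δx t ⬝ᵥ (M t *ᵥ δx t)
      ≤ Real.exp (-(2 * lam) * (t - t₀)) * (δx t₀ ⬝ᵥ (M t₀ *ᵥ δx t₀)) := by
  have energy_deriv (s : ℝ) := (hδxdiff s).hasDerivAt.dotProduct
    ((hMdiff s).hasDerivAt.mulVec (hδxdiff s).hasDerivAt)
  refine fun t ht ↦ le_exp_mul_of_hasDerivAt_le_mul (fun s _ ↦ energy_deriv s) (fun s hs ↦ ?_) ht
  rw [closedLoop_energy_deriv (hMsymm s) (hδx s hs)]
  exact hineq s hs (δx s)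

/-- exponential decay of the differential energy `δxᵀMδx` along the
closed-loop differential dynamics `δx' = Aδx − (ρ/2)BBᵀMδx`, provided the
contraction matrix inequality
`M' + MA + AᵀM − ρ·MBBᵀM ≤ −2λM` holds for all `t ≥ t₀`. -/
theorem energy_exponential_decay {n m : ℕ}
    (M : ℝ → Matrix (Fin n) (Fin n) ℝ)
    (A : ℝ → Matrix (Fin n) (Fin n) ℝ) (B : ℝ → Matrix (Fin n) (Fin m) ℝ)
    (ρ : ℝ → ℝ) (lam t₀ : ℝ) (hlam : 0 < lam)
    (hMdiff : Differentiable ℝ M)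
    (hMsymm : ∀ s, (M s).IsSymm) (hMpsd : ∀ s, (M s).PosSemidef)
    (hineq : ∀ t ≥ t₀, ∀ v : Fin n → ℝ,
      v ⬝ᵥ ((deriv M t + M t * A t + (A t)ᵀ * M t
        - ρ t • (M t * B t * (B t)ᵀ * M t)) *ᵥ v) ≤ -(2 * lam) * (v ⬝ᵥ (M t *ᵥ v)))
    (δx : ℝ → Fin n → ℝ) (hδxdiff : Differentiable ℝ δx)
    (hδx : ∀ t ≥ t₀, deriv δx t
      = A t *ᵥ δx t - (ρ t / 2) • ((B t * (B t)ᵀ * M t) *ᵥ δx t)) :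
    ∀ t ≥ t₀, δx t ⬝ᵥ (M t *ᵥ δx t)
      ≤ Real.exp (-(2 * lam) * (t - t₀)) * (δx t₀ ⬝ᵥ (M t₀ *ᵥ δx t₀)) :=
  energy_exponential_decay_general M A B ρ lam t₀ hMdiff hMsymm hineq δx hδxdiff hδx
end

section
/- Let S ∈ ℝ^{n×q}, 𝔐 ∈ ℝ^{q×q} symmetric, and constants a₁, a₂, σ₁, σ₂ > 0 satisfy a₁·wᵀw ≤ wᵀ𝔐w ≤ a₂·wᵀw and σ₁²·wᵀw ≤ wᵀ(SᵀS)w ≤ σ₂²·wᵀw for all w ∈ ℝ^q. Define M := P_S 𝔐 P_Sᵀ with P_S = S(SᵀS)⁻¹. Then for every v ∈ ℝ^q, the vector δx := S·v satisfies (a₁/σ₂²)·‖δx‖² ≤ δxᵀ M δx ≤ (a₂/σ₁²)·‖δx‖², where ‖·‖ is the Euclidean 2-norm. -/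
/-!
Since `Sᵀ P_S = 1`, congruence by `S` undoes the construction: `Sᵀ M S = 𝔐`. Hence for
`δx = S v` the metric reads `δxᵀ M δx = vᵀ 𝔐 v` while `‖δx‖² = vᵀ SᵀS v`, and both quadratic
forms in `v` are squeezed between multiples of `vᵀ v`. The lower bound `σ₁² I ≤ SᵀS` also
makes `SᵀS` invertible, so that `P_S` is a genuine left inverse of `Sᵀ`.
-/

open Matrix

namespace Matrix

variable {m k R : Type*} [Fintype m] [Fintype k]

theorem mulVec_dotProduct_mulVec_mulVec [CommSemiring R] (S : Matrix m k R) (A : Matrix m m R)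
    (v : k → R) : (S *ᵥ v) ⬝ᵥ (A *ᵥ (S *ᵥ v)) = v ⬝ᵥ ((Sᵀ * A * S) *ᵥ v) := by
  rw [← mulVec_mulVec, ← mulVec_mulVec, dotProduct_mulVec v Sᵀ, vecMul_transpose]

theorem transpose_mul_mul_mul_transpose_mul [DecidableEq k] [CommSemiring R] {S P : Matrix m k R}
    (hSP : Sᵀ * P = 1) (A : Matrix k k R) : Sᵀ * (P * A * Pᵀ) * S = A := by
  have hPS : Pᵀ * S = 1 := by simpa [transpose_mul] using congrArg transpose hSP
  calc Sᵀ * (P * A * Pᵀ) * S = (Sᵀ * P) * A * (Pᵀ * S) := by simp only [Matrix.mul_assoc]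
    _ = A := by rw [hSP, hPS, Matrix.one_mul, Matrix.mul_one]

theorem transpose_mul_mul_inv_gram [DecidableEq k] [CommRing R] (S : Matrix m k R)
    (hS : IsUnit (Sᵀ * S).det) : Sᵀ * (S * (Sᵀ * S)⁻¹) = 1 := by
  rw [← Matrix.mul_assoc, mul_nonsing_inv _ hS]

theorem isUnit_det_of_le_dotProduct_mulVec [DecidableEq k] [Field R] [LinearOrder R]
    [IsStrictOrderedRing R] {A : Matrix k k R} {c : R} (hc : 0 < c)
    (hA : ∀ w : k → R, c * (w ⬝ᵥ w) ≤ w ⬝ᵥ (A *ᵥ w)) : IsUnit A.det := by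
  refine Ne.isUnit (mt exists_mulVec_eq_zero_iff.mpr ?_)
  rintro ⟨w, hw0, hAw⟩
  have hww : w ⬝ᵥ w ≤ 0 :=
    nonpos_of_mul_nonpos_right (by simpa only [hAw, dotProduct_zero] using hA w) hc
  have hww' : 0 ≤ w ⬝ᵥ w := Finset.sum_nonneg fun i _ => mul_self_nonneg (w i)
  exact hw0 (dotProduct_self_eq_zero.mp (le_antisymm hww hww'))

end Matrix

theorem reduced_metric_uniform_bounds_general {n q : ℕ}
    (S : Matrix (Fin n) (Fin q) ℝ) (𝔐 : Matrix (Fin q) (Fin q) ℝ)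
    (a₁ a₂ σ₁ σ₂ : ℝ)
    (ha₁ : 0 < a₁) (ha₂ : 0 < a₂) (hσ₁ : 0 < σ₁) (hσ₂ : 0 < σ₂)
    (h𝔐low : ∀ w : Fin q → ℝ, a₁ * (w ⬝ᵥ w) ≤ w ⬝ᵥ (𝔐 *ᵥ w))
    (h𝔐up : ∀ w : Fin q → ℝ, w ⬝ᵥ (𝔐 *ᵥ w) ≤ a₂ * (w ⬝ᵥ w))
    (hSlow : ∀ w : Fin q → ℝ, σ₁ ^ 2 * (w ⬝ᵥ w) ≤ w ⬝ᵥ ((Sᵀ * S) *ᵥ w))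
    (hSup : ∀ w : Fin q → ℝ, w ⬝ᵥ ((Sᵀ * S) *ᵥ w) ≤ σ₂ ^ 2 * (w ⬝ᵥ w))
    (v : Fin q → ℝ) :
    a₁ / σ₂ ^ 2 * ((S *ᵥ v) ⬝ᵥ (S *ᵥ v))
        ≤ (S *ᵥ v) ⬝ᵥ (((S * (Sᵀ * S)⁻¹) * 𝔐 * (S * (Sᵀ * S)⁻¹)ᵀ) *ᵥ (S *ᵥ v)) ∧
      (S *ᵥ v) ⬝ᵥ (((S * (Sᵀ * S)⁻¹) * 𝔐 * (S * (Sᵀ * S)⁻¹)ᵀ) *ᵥ (S *ᵥ v))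
        ≤ a₂ / σ₁ ^ 2 * ((S *ᵥ v) ⬝ᵥ (S *ᵥ v)) := by
  have hGram : IsUnit (Sᵀ * S).det := isUnit_det_of_le_dotProduct_mulVec (by positivity) hSlow
  have hnorm : (S *ᵥ v) ⬝ᵥ (S *ᵥ v) = v ⬝ᵥ ((Sᵀ * S) *ᵥ v) := by
    simpa using mulVec_dotProduct_mulVec_mulVec S 1 v
  rw [mulVec_dotProduct_mulVec_mulVec,
    transpose_mul_mul_mul_transpose_mul (transpose_mul_mul_inv_gram S hGram), hnorm,
    div_mul_eq_mul_div, div_mul_eq_mul_div, div_le_iff₀ (by positivity), le_div_iff₀ (by positivity)]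
  exact ⟨by linarith [mul_le_mul_of_nonneg_left (hSup v) ha₁.le,
      mul_le_mul_of_nonneg_left (h𝔐low v) (sq_nonneg σ₂)],
    by linarith [mul_le_mul_of_nonneg_left (hSlow v) ha₂.le,
      mul_le_mul_of_nonneg_left (h𝔐up v) (sq_nonneg σ₁)]⟩

/-- if `a₁ I ≤ 𝔐 ≤ a₂ I` and `σ₁² I ≤ SᵀS ≤ σ₂² I` (quadratic-form
bounds), then the metric `M = P_S 𝔐 P_Sᵀ` with `P_S = S(SᵀS)⁻¹` satisfies
`(a₁/σ₂²)‖δx‖² ≤ δxᵀMδx ≤ (a₂/σ₁²)‖δx‖²` for every tangent vector `δx = S·v`,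
where `‖δx‖² = δxᵀδx` is the squared Euclidean 2-norm. -/
theorem reduced_metric_uniform_bounds {n q : ℕ}
    (S : Matrix (Fin n) (Fin q) ℝ) (𝔐 : Matrix (Fin q) (Fin q) ℝ)
    (h𝔐 : 𝔐.IsSymm) (a₁ a₂ σ₁ σ₂ : ℝ)
    (ha₁ : 0 < a₁) (ha₂ : 0 < a₂) (hσ₁ : 0 < σ₁) (hσ₂ : 0 < σ₂)
    (h𝔐low : ∀ w : Fin q → ℝ, a₁ * (w ⬝ᵥ w) ≤ w ⬝ᵥ (𝔐 *ᵥ w))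
    (h𝔐up : ∀ w : Fin q → ℝ, w ⬝ᵥ (𝔐 *ᵥ w) ≤ a₂ * (w ⬝ᵥ w))
    (hSlow : ∀ w : Fin q → ℝ, σ₁ ^ 2 * (w ⬝ᵥ w) ≤ w ⬝ᵥ ((Sᵀ * S) *ᵥ w))
    (hSup : ∀ w : Fin q → ℝ, w ⬝ᵥ ((Sᵀ * S) *ᵥ w) ≤ σ₂ ^ 2 * (w ⬝ᵥ w))
    (v : Fin q → ℝ) :
    a₁ / σ₂ ^ 2 * ((S *ᵥ v) ⬝ᵥ (S *ᵥ v))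
        ≤ (S *ᵥ v) ⬝ᵥ (((S * (Sᵀ * S)⁻¹) * 𝔐 * (S * (Sᵀ * S)⁻¹)ᵀ) *ᵥ (S *ᵥ v)) ∧
      (S *ᵥ v) ⬝ᵥ (((S * (Sᵀ * S)⁻¹) * 𝔐 * (S * (Sᵀ * S)⁻¹)ᵀ) *ᵥ (S *ᵥ v))
        ≤ a₂ / σ₁ ^ 2 * ((S *ᵥ v) ⬝ᵥ (S *ᵥ v)) :=
  reduced_metric_uniform_bounds_general S 𝔐 a₁ a₂ σ₁ σ₂ ha₁ ha₂ hσ₁ hσ₂ h𝔐low h𝔐up hSlow hSup v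
end
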